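/- arXiv:1104.0311 — 2 statements merged into one kernel-verified Lean document; each statement's English description precedes it below -/
import Mathlib

section
/- Let Q₆ ∈ SO(2) be the rotation of ℝ² through angle π/3. For any matrix G ∈ ℝ^{2×2} and any unit vector r ∈ ℝ², the sum over j = 1,…,6 of |G (Q₆^j r)|² equals 3|G|², where |·| denotes the Euclidean (Frobenius) norm. -/
/-!
The six vectors `Q₆ʲ r` are `±r, ±Q₆ r, ±Q₆² r`, and the sum of their outer products
is `3 |r|² I` (the vertices of a regular hexagon form a tight frame). Since
`|G v|² = tr (G v vᵀ Gᵀ)`, the sum in question is `tr (G (3 I) Gᵀ) = 3 |G|²` when `|r| = 1`.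
-/

open Real Matrix Finset

noncomputable def Q6 : Matrix (Fin 2) (Fin 2) ℝ :=
  !![Real.cos (Real.pi / 3), -Real.sin (Real.pi / 3);
     Real.sin (Real.pi / 3),  Real.cos (Real.pi / 3)]

/-- Squared Euclidean norm of a vector in ℝ². -/
def vnormSq (v : Fin 2 → ℝ) : ℝ := v 0 ^ 2 + v 1 ^ 2

/-- Squared Frobenius norm of a 2×2 matrix. -/
def frobSq (G : Matrix (Fin 2) (Fin 2) ℝ) : ℝ := ∑ i, ∑ j, G i j ^ 2

theorem mulVec_dotProduct_mulVec_self {m n R : Type*} [Fintype m] [Fintype n] [CommSemiring R]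
    (G : Matrix m n R) (v : n → R) :
    (G *ᵥ v) ⬝ᵥ (G *ᵥ v) = trace (G * vecMulVec v v * Gᵀ) := by
  rw [← trace_vecMulVec, mul_vecMulVec, vecMulVec_mul, vecMul_transpose]

lemma vnormSq_eq_dotProduct (v : Fin 2 → ℝ) : vnormSq v = v ⬝ᵥ v := by
  simp [vnormSq, dotProduct, Fin.sum_univ_two, sq]

lemma frobSq_eq_trace_mul_transpose (G : Matrix (Fin 2) (Fin 2) ℝ) :
    frobSq G = trace (G * Gᵀ) := by
  simp [frobSq, trace, mul_apply, sq]

lemma vnormSq_mulVec (G : Matrix (Fin 2) (Fin 2) ℝ) (v : Fin 2 → ℝ) :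
    vnormSq (G *ᵥ v) = trace (G * vecMulVec v v * Gᵀ) := by
  rw [vnormSq_eq_dotProduct, mulVec_dotProduct_mulVec_self]

lemma Q6_eq : Q6 = !![1 / 2, -(√3 / 2); √3 / 2, 1 / 2] := by
  rw [Q6, cos_pi_div_three, sin_pi_div_three]

lemma Q6_sq : Q6 ^ 2 = !![-(1 / 2), -(√3 / 2); √3 / 2, -(1 / 2)] := by
  have h3 : √3 ^ 2 = 3 := sq_sqrt (by norm_num)
  rw [sq, Q6_eq, mul_fin_two]
  ext i j
  fin_cases i <;> fin_cases j <;>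
    simp only [of_apply, cons_val', cons_val_zero, cons_val_one, cons_val_fin_one, Fin.zero_eta,
      Fin.mk_one, Fin.isValue] <;>
    linarith

lemma Q6_pow_three : Q6 ^ 3 = -1 := by
  have h3 : √3 ^ 2 = 3 := sq_sqrt (by norm_num)
  rw [pow_succ, Q6_sq, Q6_eq, mul_fin_two]
  ext i j
  fin_cases i <;> fin_cases j <;>
    simp only [of_apply, cons_val', cons_val_zero, cons_val_one, cons_val_fin_one, Fin.zero_eta,
      Fin.mk_one, Fin.isValue, Matrix.neg_apply, one_apply_eq, one_apply_ne, ne_eq, zero_ne_one,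
      one_ne_zero, not_false_eq_true] <;>
    linarith

lemma vecMulVec_Q6_pow_add_three (j : ℕ) (r : Fin 2 → ℝ) :
    vecMulVec (Q6 ^ (j + 3) *ᵥ r) (Q6 ^ (j + 3) *ᵥ r) =
      vecMulVec (Q6 ^ j *ᵥ r) (Q6 ^ j *ᵥ r) := by
  rw [pow_add, Q6_pow_three, mul_neg_one, neg_mulVec, neg_vecMulVec, vecMulVec_neg, neg_neg]

lemma sum_vecMulVec_Q6_pow_Icc_one_three (r : Fin 2 → ℝ) :
    ∑ j ∈ Icc 1 3, vecMulVec (Q6 ^ j *ᵥ r) (Q6 ^ j *ᵥ r) = (3 / 2 * vnormSq r) • 1 := by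
  have h3 : √3 ^ 2 = 3 := sq_sqrt (by norm_num)
  rw [sum_Icc_succ_top (by norm_num), sum_Icc_succ_top (by norm_num), Icc_self, sum_singleton,
    pow_one, Q6_sq, Q6_pow_three, Q6_eq]
  ext i j
  fin_cases i <;> fin_cases j <;>
    simp only [vecMulVec, mulVec, dotProduct, vnormSq, Fin.sum_univ_two, of_apply, cons_val',
      cons_val_zero, cons_val_one, cons_val_fin_one, Fin.zero_eta, Fin.mk_one, Fin.isValue,
      Matrix.add_apply, Matrix.smul_apply, Matrix.neg_apply, one_apply_eq, one_apply_ne, ne_eq,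
      zero_ne_one, one_ne_zero, not_false_eq_true, smul_eq_mul]
  all_goals ring_nf; rw [h3]; ring

lemma sum_vecMulVec_Q6_pow_Icc_one_six (r : Fin 2 → ℝ) :
    ∑ j ∈ Icc 1 6, vecMulVec (Q6 ^ j *ᵥ r) (Q6 ^ j *ᵥ r) = (3 * vnormSq r) • 1 := by
  have hsplit : ∑ j ∈ Icc 1 6, vecMulVec (Q6 ^ j *ᵥ r) (Q6 ^ j *ᵥ r) =
      ∑ j ∈ Icc 1 3, vecMulVec (Q6 ^ j *ᵥ r) (Q6 ^ j *ᵥ r) +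
        ∑ j ∈ Icc 1 3, vecMulVec (Q6 ^ (j + 3) *ᵥ r) (Q6 ^ (j + 3) *ᵥ r) := by
    simp [sum_Icc_succ_top, add_assoc]
  simp_rw [hsplit, vecMulVec_Q6_pow_add_three, sum_vecMulVec_Q6_pow_Icc_one_three, ← add_smul]
  congr 1
  ring

/-- For any `G ∈ ℝ^{2×2}` and unit vector `r`, `∑_{j=1}^6 |G Q₆ʲ r|² = 3 |G|²`. -/
theorem hex_quadratic_identity (G : Matrix (Fin 2) (Fin 2) ℝ) (r : Fin 2 → ℝ)
    (hr : vnormSq r = 1) :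
    ∑ j ∈ Finset.Icc 1 6, vnormSq (G.mulVec ((Q6 ^ j).mulVec r)) = 3 * frobSq G := by
  calc ∑ j ∈ Icc 1 6, vnormSq (G *ᵥ (Q6 ^ j *ᵥ r))
      = trace (G * (∑ j ∈ Icc 1 6, vecMulVec (Q6 ^ j *ᵥ r) (Q6 ^ j *ᵥ r)) * Gᵀ) := by
        simp only [vnormSq_mulVec, mul_sum, sum_mul, trace_sum]
    _ = 3 * frobSq G := by
        rw [sum_vecMulVec_Q6_pow_Icc_one_six, hr, mul_one, mul_smul_comm, mul_one, smul_mul_assoc,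
          trace_smul, smul_eq_mul, frobSq_eq_trace_mul_transpose]
end

section
/- Counting of face crossings by a segment (weak form): let 𝒯 be a finite set of closed triangles in the plane forming a triangulation (any two triangles intersect in a common face, edge, or vertex, or not at all), with all edge lengths ≥ 1 and all angles bounded below by θ₀ > 0. Then there exists a constant C depending only on θ₀ such that for any segment b of length L, the number of triangulation edges that intersect the relative interior of b in exactly one point is at most C(L + 1). -/
/-!
Every edge meeting the segment `[x, y]` at a point `p` lies in a triangle containing a ball of
radius `sin θ / 8` centred within distance `1` of `p`: push `p` a bounded distance along its edge
away from the endpoints, then towards the opposite vertex. The lower bounds on edges and angles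
keep each barycentric coordinate of the centre above the radius divided by the corresponding
height. Balls in triangles with different vertex sets are disjoint, because two triangles meet in
a common face, which has empty interior. All balls lie within distance `3` of `⌈L⌉ + 1` points
spaced along the segment, so comparing volumes bounds the number of triangles by `O(L + 1)`, and
each triangle has at most nine ordered edges.
-/

open EuclideanGeometry Set
open Metric MeasureTheory InnerProductGeometry Real Module AffineMap
open scoped Finset

namespace FaceCrossing

lemma range_fin_three_eq_of_ne {α : Type*} (T : Fin 3 → α) {i j k : Fin 3} (hij : i ≠ j)
    (hik : i ≠ k) (hjk : j ≠ k) : range T = {T i, T j, T k} := by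
  have hall : ∀ m, m = i ∨ m = j ∨ m = k := by
    revert i j k; decide
  ext w
  simp only [mem_range, mem_insert_iff, mem_singleton_iff]
  constructor
  · rintro ⟨m, rfl⟩
    rcases hall m with rfl | rfl | rfl <;> simp
  · rintro (rfl | rfl | rfl) <;> exact ⟨_, rfl⟩

section Normed

variable {E : Type*} [NormedAddCommGroup E] [NormedSpace ℝ E]

lemma exists_finset_card_le_segment_subset_iUnion_closedBall (x y : E) :
    ∃ Q : Finset E, (#Q : ℝ) ≤ dist x y + 2 ∧ segment ℝ x y ⊆ ⋃ q ∈ Q, closedBall q 1 := by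
  classical
  set n := ⌈dist x y⌉₊
  refine ⟨(Finset.range (n + 1)).image fun k : ℕ => lineMap x y ((k : ℝ) / n), ?_, ?_⟩
  · calc (#_ : ℝ) ≤ n + 1 := by
          exact_mod_cast Finset.card_image_le.trans (Finset.card_range _).le
      _ ≤ dist x y + 2 := by linarith [Nat.ceil_lt_add_one (dist_nonneg (x := x) (y := y))]
  rw [segment_eq_image_lineMap]
  rintro _ ⟨τ, ⟨hτ0, hτ1⟩, rfl⟩
  have hk : ⌊τ * n⌋₊ ≤ n := Nat.floor_le_of_le (by nlinarith [(n.cast_nonneg : (0 : ℝ) ≤ n)])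
  refine mem_iUnion₂.2
    ⟨_, Finset.mem_image_of_mem _ (Finset.mem_range.2 (Nat.lt_succ_of_le hk)), ?_⟩
  rw [mem_closedBall, dist_lineMap_lineMap]
  rcases Nat.eq_zero_or_pos n with hn | hn
  -- `n = 0` forces `x = y`, so the junk value `k / 0 = 0` is harmless
  · rw [Nat.ceil_eq_zero.1 hn |>.antisymm dist_nonneg, mul_zero]; exact zero_le_one
  have hn' : (0 : ℝ) < n := Nat.cast_pos.2 hn
  have hfloor : (⌊τ * n⌋₊ : ℝ) ≤ τ * n := Nat.floor_le (by positivity)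
  have hfloor' : τ * n < ⌊τ * n⌋₊ + 1 := Nat.lt_floor_add_one _
  have hτk : dist τ (⌊τ * n⌋₊ / n) ≤ 1 / n := by
    rw [Real.dist_eq, show τ - ⌊τ * n⌋₊ / n = (τ * n - ⌊τ * n⌋₊) / n by field_simp, abs_div,
      abs_of_nonneg (sub_nonneg.2 hfloor), abs_of_pos hn']
    exact div_le_div_of_nonneg_right (by linarith) hn'.le
  calc dist τ (⌊τ * n⌋₊ / n) * dist x y ≤ 1 / n * n :=
        mul_le_mul hτk (Nat.le_ceil _) dist_nonneg (by positivity)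
    _ = 1 := by field_simp

lemma card_mul_pow_finrank_le_of_pairwiseDisjoint [FiniteDimensional ℝ E] [Nontrivial E]
    [MeasurableSpace E] [BorelSpace E] {ι : Type*} {s : Finset ι} {c : ι → E} {r R : ℝ}
    (hr : 0 ≤ r) (hR : 0 ≤ R) {Q : Finset E}
    (hdisj : (s : Set ι).PairwiseDisjoint fun i => ball (c i) r)
    (hsub : ∀ i ∈ s, ball (c i) r ⊆ ⋃ q ∈ Q, ball q R) :
    (#s : ℝ) * r ^ finrank ℝ E ≤ #Q * R ^ finrank ℝ E := by
  set μ : Measure E := Measure.addHaar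
  have hvol : (#s * ENNReal.ofReal (r ^ finrank ℝ E)) * μ (ball 0 1)
      ≤ (#Q * ENNReal.ofReal (R ^ finrank ℝ E)) * μ (ball 0 1) :=
    calc (#s * ENNReal.ofReal (r ^ finrank ℝ E)) * μ (ball 0 1)
        = ∑ i ∈ s, μ (ball (c i) r) := by simp [Measure.addHaar_ball _ _ hr, mul_assoc]
      _ = μ (⋃ i ∈ s, ball (c i) r) :=
        (measure_biUnion_finset hdisj fun _ _ => measurableSet_ball).symm
      _ ≤ μ (⋃ q ∈ Q, ball q R) := measure_mono (iUnion₂_subset hsub)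
      _ ≤ ∑ q ∈ Q, μ (ball q R) := measure_biUnion_finset_le Q _
      _ = (#Q * ENNReal.ofReal (R ^ finrank ℝ E)) * μ (ball 0 1) := by
        simp [Measure.addHaar_ball _ _ hR, mul_assoc]
  rw [ENNReal.mul_le_mul_iff_left (measure_ball_pos μ 0 one_pos).ne' measure_ball_lt_top.ne,
    ← ENNReal.ofReal_natCast, ← ENNReal.ofReal_natCast, ← ENNReal.ofReal_mul (by positivity),
    ← ENNReal.ofReal_mul (by positivity), ENNReal.ofReal_le_ofReal_iff (by positivity)] at hvol
  exact hvol

end Normed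

section Module

variable {V : Type*} [AddCommGroup V] [Module ℝ V]

/- Vertex sets rather than vertex maps: a triangle listed in `𝒯` under several orderings of its
vertices is counted once. -/
open Classical in
noncomputable def vertexSetsMeeting (𝒯 : Finset (Fin 3 → V)) (x y : V) : Finset (Set V) :=
  (𝒯.filter fun T => ∃ i j, i ≠ j ∧ (segment ℝ (T i) (T j) ∩ segment ℝ x y).Nonempty).image
    range

lemma mem_vertexSetsMeeting {𝒯 : Finset (Fin 3 → V)} {x y : V} {A : Set V} :
    A ∈ vertexSetsMeeting 𝒯 x y ↔ ∃ T ∈ 𝒯, (∃ i j, i ≠ j ∧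
      (segment ℝ (T i) (T j) ∩ segment ℝ x y).Nonempty) ∧ range T = A := by
  simp [vertexSetsMeeting, and_assoc]

lemma ncard_edges_le_nine_mul_card_vertexSetsMeeting (𝒯 : Finset (Fin 3 → V)) (x y : V)
    {P : V → V → Prop}
    (hP : ∀ a b, P a b → (segment ℝ a b ∩ segment ℝ x y).Nonempty) :
    {e : V × V | ∃ T ∈ 𝒯, ∃ i j : Fin 3, i ≠ j ∧ e = (T i, T j) ∧ P e.1 e.2}.ncard
      ≤ 9 * #(vertexSetsMeeting 𝒯 x y) := by
  have hsub : {e : V × V | ∃ T ∈ 𝒯, ∃ i j : Fin 3, i ≠ j ∧ e = (T i, T j) ∧ P e.1 e.2}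
      ⊆ ⋃ A ∈ vertexSetsMeeting 𝒯 x y, A ×ˢ A := by
    rintro _ ⟨T, hT, i, j, hij, rfl, he⟩
    exact mem_biUnion (mem_vertexSetsMeeting.2 ⟨T, hT, ⟨i, j, hij, hP _ _ he⟩, rfl⟩)
      ⟨⟨i, rfl⟩, ⟨j, rfl⟩⟩
  have hcard : ∀ A ∈ vertexSetsMeeting 𝒯 x y, (A ×ˢ A).ncard ≤ 9 := by
    intro A hA
    obtain ⟨T, -, -, rfl⟩ := mem_vertexSetsMeeting.1 hA
    have h3 : (range T).ncard ≤ 3 := by simpa using Finite.card_range_le T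
    rw [ncard_prod]
    exact Nat.mul_le_mul h3 h3
  calc _ ≤ (⋃ A ∈ vertexSetsMeeting 𝒯 x y, A ×ˢ A).ncard :=
        ncard_le_ncard hsub (Finite.biUnion (Finset.finite_toSet _) fun A hA => by
          obtain ⟨T, -, -, rfl⟩ := mem_vertexSetsMeeting.1 hA
          exact (finite_range T).prod (finite_range T))
    _ ≤ ∑ A ∈ vertexSetsMeeting 𝒯 x y, (A ×ˢ A).ncard := Finset.set_ncard_biUnion_le _ _
    _ ≤ ∑ _A ∈ vertexSetsMeeting 𝒯 x y, 9 := Finset.sum_le_sum hcard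
    _ = 9 * #(vertexSetsMeeting 𝒯 x y) := by rw [Finset.sum_const, smul_eq_mul, mul_comm]

end Module

section InnerProduct

variable {V : Type*} [NormedAddCommGroup V] [InnerProductSpace ℝ V]

lemma abs_mul_norm_mul_sin_angle_le_norm (u v : V) (s t : ℝ) :
    |s| * (‖u‖ * sin (angle u v)) ≤ ‖s • u + t • v‖ := by
  rcases eq_or_ne v 0 with rfl | hv
  · simp [angle_zero_right, norm_smul]
  -- the Gram determinant of `(s • u + t • v, v)` is `s ^ 2` times that of `(u, v)`
  have hgram : ‖s • u + t • v‖ ^ 2 * ‖v‖ ^ 2 - inner ℝ (s • u + t • v) v ^ 2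
      = s ^ 2 * (‖u‖ ^ 2 * ‖v‖ ^ 2 - inner ℝ u v ^ 2) := by
    simp only [← real_inner_self_eq_norm_sq, inner_add_left, inner_add_right,
      real_inner_smul_left, real_inner_smul_right, real_inner_comm u v]
    ring
  have hsin : (‖u‖ * sin (angle u v) * ‖v‖) ^ 2 = ‖u‖ ^ 2 * ‖v‖ ^ 2 - inner ℝ u v ^ 2 := by
    rw [show ‖u‖ * sin (angle u v) * ‖v‖ = sin (angle u v) * (‖u‖ * ‖v‖) by ring,
      sin_angle_mul_norm_mul_norm, sq_sqrt (by nlinarith [real_inner_mul_inner_self_le u v]),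
      real_inner_self_eq_norm_sq, real_inner_self_eq_norm_sq]
    ring
  have hsq : (|s| * (‖u‖ * sin (angle u v)) * ‖v‖) ^ 2 ≤ (‖s • u + t • v‖ * ‖v‖) ^ 2 := by
    rw [mul_assoc, mul_pow, hsin, sq_abs]
    nlinarith [sq_nonneg (inner ℝ (s • u + t • v) v)]
  have := (pow_le_pow_iff_left₀ (by positivity [sin_angle_nonneg u v]) (by positivity)
    two_ne_zero).1 hsq
  exact le_of_mul_le_mul_right this (norm_pos_iff.2 hv)

lemma exists_smul_add_smul_eq (hV : finrank ℝ V = 2) {u v : V} (hu : u ≠ 0) (hv : v ≠ 0)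
    (huv : sin (angle u v) ≠ 0) (w : V) : ∃ s t : ℝ, s • u + t • v = w := by
  have hsin : 0 < sin (angle u v) := (sin_angle_nonneg u v).lt_of_ne' huv
  have hli : LinearIndependent ℝ ![u, v] := by
    refine LinearIndependent.pair_iff.2 fun s t hst => ⟨?_, ?_⟩
    · have := abs_mul_norm_mul_sin_angle_le_norm u v s t
      rw [hst, norm_zero] at this
      exact abs_nonpos_iff.1
        (nonpos_of_mul_nonpos_left this (by positivity [norm_pos_iff.2 hu]))
    · have := abs_mul_norm_mul_sin_angle_le_norm v u t s
      rw [add_comm, hst, norm_zero, InnerProductGeometry.angle_comm] at this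
      exact abs_nonpos_iff.1
        (nonpos_of_mul_nonpos_left this (by positivity [norm_pos_iff.2 hv]))
  have hspan := hli.span_eq_top_of_card_eq_finrank (by simp [hV])
  rw [Matrix.range_cons_cons_empty] at hspan
  exact Submodule.mem_span_pair.1 (hspan ▸ Submodule.mem_top)

lemma smul_add_smul_add_smul_mem_convexHull {a b c : V} {α β γ : ℝ} (hα : 0 ≤ α) (hβ : 0 ≤ β)
    (hγ : 0 ≤ γ) (hsum : α + β + γ = 1) : α • a + β • b + γ • c ∈ convexHull ℝ {a, b, c} := by
  have := (convex_convexHull ℝ ({a, b, c} : Set V)).sum_mem (t := Finset.univ)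
    (w := ![α, β, γ]) (z := ![a, b, c]) (fun i _ => by fin_cases i <;> assumption)
    (by simp [Fin.sum_univ_three, hsum])
    (fun i _ => subset_convexHull ℝ _ (by fin_cases i <;> simp))
  simpa [Fin.sum_univ_three, add_assoc] using this

lemma ball_subset_convexHull_of_le_mul_height (hV : finrank ℝ V = 2) {a b c : V}
    {α β γ ρ : ℝ}
    (hα : ρ ≤ α * (dist a b * sin (∠ a b c))) (hβ : ρ ≤ β * (dist b a * sin (∠ b a c)))
    (hγ : ρ ≤ γ * (dist c a * sin (∠ b a c))) (hsum : α + β + γ = 1) :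
    ball (α • a + β • b + γ • c) ρ ⊆ convexHull ℝ {a, b, c} := by
  intro w hw
  have hρ : 0 < ρ := pos_of_mem_ball hw
  rw [mem_ball, dist_eq_norm] at hw
  have hβ0 : dist b a * sin (∠ b a c) ≠ 0 := fun h => by rw [h, mul_zero] at hβ; linarith
  have hγ0 : dist c a * sin (∠ b a c) ≠ 0 := fun h => by rw [h, mul_zero] at hγ; linarith
  obtain ⟨s, t, hst⟩ := exists_smul_add_smul_eq hV
    (sub_ne_zero.2 (dist_ne_zero.1 (left_ne_zero_of_mul hβ0)))
    (sub_ne_zero.2 (dist_ne_zero.1 (left_ne_zero_of_mul hγ0))) (right_ne_zero_of_mul hβ0)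
    (w - (α • a + β • b + γ • c))
  -- each barycentric coordinate of `w` differs from that of the centre by less than its margin
  have margin : ∀ {x y X : ℝ}, 0 ≤ X → |x| * X ≤ ‖w - (α • a + β • b + γ • c)‖ →
      ρ ≤ y * X → |x| < y :=
    fun hX hx hy => lt_of_mul_lt_mul_right (hx.trans_lt (hw.trans_le hy)) hX
  have hs : |s| < β := margin (by positivity [sin_angle_nonneg (b - a) (c - a)])
    (by rw [dist_eq_norm, ← hst]; exact abs_mul_norm_mul_sin_angle_le_norm _ _ s t) hβ
  have ht : |t| < γ := margin (by positivity [sin_angle_nonneg (b - a) (c - a)])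
    (by
      rw [dist_eq_norm, ← hst, add_comm, EuclideanGeometry.angle, InnerProductGeometry.angle_comm]
      exact abs_mul_norm_mul_sin_angle_le_norm _ _ t s) hγ
  have hst' : |s + t| < α := margin (by positivity [sin_angle_nonneg (a - b) (c - b)])
    (by
      rw [dist_eq_norm, ← hst, ← abs_neg,
        show s • (b - a) + t • (c - a) = (-(s + t)) • (a - b) + t • (c - b) by module]
      exact abs_mul_norm_mul_sin_angle_le_norm _ _ _ t) hα
  rw [abs_lt] at hs ht hst'
  convert smul_add_smul_add_smul_mem_convexHull (a := a) (b := b) (c := c)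
    (by linarith : 0 ≤ α - (s + t)) (by linarith : 0 ≤ β + s) (by linarith : 0 ≤ γ + t)
    (by linarith) using 1
  rw [← sub_add_cancel w (α • a + β • b + γ • c), ← hst]
  module

lemma exists_ball_subset_convexHull_near_edge (hV : finrank ℝ V = 2) {a b c p : V} {σ : ℝ}
    (hσ : 0 ≤ σ) (hab : 1 ≤ dist a b) (hac : 1 ≤ dist a c) (hA : σ ≤ sin (∠ b a c))
    (hB : σ ≤ sin (∠ a b c)) (hp : p ∈ segment ℝ a b) :
    ∃ z, dist z p ≤ 1 ∧ ball z (σ / 8) ⊆ convexHull ℝ {a, b, c} := by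
  rw [segment_eq_image_lineMap] at hp
  obtain ⟨τ, ⟨hτ0, hτ1⟩, rfl⟩ := hp
  set d := dist a b
  set M := max (dist a c) (dist b c)
  have hM : 1 ≤ M := le_max_of_le_left hac
  -- move `p` a distance at most `1/4` towards the midpoint of `ab`, then `1/2` towards `c`
  set δ := 1 / (2 * d) with hδ_def
  set t := τ + δ * (1 / 2 - τ) with ht_def
  set k := 1 / (2 * M) with hk_def
  have hδ0 : 0 < δ := by positivity
  have hδ : δ * d = 1 / 2 := by rw [hδ_def]; field_simp
  have hk0 : 0 < k := by positivity
  have hk : k * M = 1 / 2 := by rw [hk_def]; field_simp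
  have hδ1 : δ ≤ 1 / 2 := by nlinarith
  have hk1 : k ≤ 1 / 2 := by nlinarith
  have ht0 : δ / 2 ≤ t := by nlinarith
  have ht1 : δ / 2 ≤ 1 - t := by nlinarith
  have hpc : dist (lineMap a b t) c ≤ M :=
    (convexOn_dist c convex_univ).le_on_segment trivial trivial
      (segment_eq_image_lineMap ℝ a b ▸ ⟨t, ⟨by linarith, by linarith⟩, rfl⟩)
  refine ⟨lineMap (lineMap a b t) c k, ?_, ?_⟩
  · calc dist (lineMap (lineMap a b t) c k) (lineMap a b τ)
        ≤ dist (lineMap (lineMap a b t) c k) (lineMap a b t)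
          + dist (lineMap a b t) (lineMap a b τ) := dist_triangle _ _ _
      _ = k * dist (lineMap a b t) c + δ * |1 / 2 - τ| * d := by
        rw [dist_lineMap_left, dist_lineMap_lineMap, Real.dist_eq, Real.norm_of_nonneg hk0.le,
          show t - τ = δ * (1 / 2 - τ) by ring, abs_mul, abs_of_pos hδ0]
      _ ≤ k * M + δ * (1 / 2) * d := by
        gcongr
        rw [abs_le]; constructor <;> linarith
      _ ≤ 1 := by nlinarith
  have hz : lineMap (lineMap a b t) c k
      = ((1 - k) * (1 - t)) • a + ((1 - k) * t) • b + k • c := by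
    simp only [lineMap_apply_module]
    module
  rw [hz]
  refine ball_subset_convexHull_of_le_mul_height hV ?_ ?_ ?_ (by ring)
  · calc σ / 8 = 1 / 2 * (δ / 2) * (d * σ) := by nlinarith
      _ ≤ (1 - k) * (1 - t) * (d * sin (∠ a b c)) := by
        gcongr <;> nlinarith
  · calc σ / 8 = 1 / 2 * (δ / 2) * (d * σ) := by nlinarith
      _ ≤ (1 - k) * t * (dist b a * sin (∠ b a c)) := by
        rw [dist_comm b a]
        gcongr <;> nlinarith
  · have hsine : dist c a * sin (∠ b a c) = dist b c * sin (∠ a b c) := by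
      rw [mul_comm, dist_comm, sin_angle_mul_dist_eq_sin_angle_mul_dist, angle_comm c b a,
        dist_comm c b, mul_comm]
    calc σ / 8 ≤ k * (M * σ) := by nlinarith
      _ ≤ k * (dist c a * sin (∠ b a c)) := by
        rw [max_mul_of_nonneg _ _ hσ, dist_comm c a]
        gcongr
        refine max_le (by gcongr) ?_
        rw [dist_comm a c, hsine]
        gcongr

lemma sin_le_sin_angle_of_le_angles {a b c : V} (hab : a ≠ b) {θ : ℝ} (hθ : 0 ≤ θ)
    (hA : θ ≤ ∠ b a c) (hB : θ ≤ ∠ a b c) (hC : θ ≤ ∠ a c b) : sin θ ≤ sin (∠ b a c) := by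
  have hsum := angle_add_angle_add_angle_eq_pi c hab
  rw [angle_comm c b a] at hsum
  have hθπ : θ ≤ π - θ := by linarith
  have := strictConcaveOn_sin_Icc.concaveOn.ge_on_segment ⟨hθ, by linarith⟩
    ⟨by linarith, by linarith⟩
    ((segment_eq_Icc hθπ).symm ▸ ⟨hA, by linarith⟩ : ∠ b a c ∈ segment ℝ θ (π - θ))
  rwa [sin_pi_sub, min_self] at this

lemma eq_range_of_subset_range_of_affineSpan_eq_top (hV : finrank ℝ V = 2) {T : Fin 3 → V}
    {S : Set V} (hS : S ⊆ range T) (htop : affineSpan ℝ S = ⊤) : S = range T := by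
  classical
  have := Module.finite_of_finrank_eq_succ hV
  refine hS.antisymm ?_
  rintro _ ⟨i, rfl⟩
  by_contra hi
  have hsub : S ⊆ (({i}ᶜ : Finset (Fin 3)).image T : Set V) := fun p hp => by
    obtain ⟨j, rfl⟩ := hS hp
    simp only [Finset.coe_image, Finset.coe_compl, Finset.coe_singleton]
    exact mem_image_of_mem T fun hji : j = i => hi (hji ▸ hp)
  have hrank := (Submodule.finrank_mono (vectorSpan_mono ℝ hsub)).trans
    (finrank_vectorSpan_image_finset_le ℝ T {i}ᶜ (n := 1) (by rw [Finset.card_compl]; rfl))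
  rw [← direction_affineSpan, htop, AffineSubspace.direction_top, finrank_top, hV] at hrank
  omega

lemma interior_convexHull_inter_convexHull_eq_empty (hV : finrank ℝ V = 2)
    {T₁ T₂ : Fin 3 → V} {S : Set V} (hS : S ⊆ range T₁ ∩ range T₂)
    (hinter : convexHull ℝ (range T₁) ∩ convexHull ℝ (range T₂) = convexHull ℝ S)
    (hne : range T₁ ≠ range T₂) :
    interior (convexHull ℝ (range T₁) ∩ convexHull ℝ (range T₂)) = ∅ := by
  have := Module.finite_of_finrank_eq_succ hV
  rw [hinter, ← not_nonempty_iff_eq_empty]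
  intro h
  have htop := affineSpan_eq_top_of_nonempty_interior h
  exact hne ((eq_range_of_subset_range_of_affineSpan_eq_top hV (hS.trans inter_subset_left)
    htop).symm.trans (eq_range_of_subset_range_of_affineSpan_eq_top hV
    (hS.trans inter_subset_right) htop))

lemma card_vertexSetsMeeting_mul_sq_le [MeasurableSpace V] [BorelSpace V]
    (hV : finrank ℝ V = 2) {𝒯 : Finset (Fin 3 → V)}
    (hface : ∀ T₁ ∈ 𝒯, ∀ T₂ ∈ 𝒯, ∃ S : Set V, S ⊆ range T₁ ∩ range T₂ ∧
      convexHull ℝ (range T₁) ∩ convexHull ℝ (range T₂) = convexHull ℝ S)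
    (hedge : ∀ T ∈ 𝒯, ∀ i j : Fin 3, i ≠ j → 1 ≤ dist (T i) (T j)) {σ : ℝ} (hσ : 0 ≤ σ)
    (hsin : ∀ T ∈ 𝒯, ∀ i j k : Fin 3, i ≠ j → i ≠ k → j ≠ k → σ ≤ sin (∠ (T j) (T i) (T k)))
    {x y : V} {Q : Finset V} (hQ : segment ℝ x y ⊆ ⋃ q ∈ Q, closedBall q 1) :
    (#(vertexSetsMeeting 𝒯 x y) : ℝ) * (σ / 8) ^ 2 ≤ #Q * 3 ^ 2 := by
  have hball : ∀ A ∈ vertexSetsMeeting 𝒯 x y, ∃ T ∈ 𝒯, range T = A ∧ ∃ z,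
      ball z (σ / 8) ⊆ convexHull ℝ (range T) ∧ ball z (σ / 8) ⊆ ⋃ q ∈ Q, ball q 3 := by
    intro A hA
    obtain ⟨T, hT, ⟨i, j, hij, p, hpT, hpxy⟩, rfl⟩ := mem_vertexSetsMeeting.1 hA
    obtain ⟨k, hki, hkj⟩ := (by decide : ∀ i j : Fin 3, ∃ k, k ≠ i ∧ k ≠ j) i j
    obtain ⟨z, hzp, hz⟩ := exists_ball_subset_convexHull_near_edge hV hσ (hedge T hT i j hij)
      (hedge T hT i k hki.symm) (hsin T hT i j k hij hki.symm hkj.symm)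
      (hsin T hT j i k hij.symm hkj.symm hki.symm) hpT
    obtain ⟨q, hq, hpq⟩ := mem_iUnion₂.1 (hQ hpxy)
    have hσ1 : σ ≤ 1 := (hsin T hT i j k hij hki.symm hkj.symm).trans (sin_le_one _)
    refine ⟨T, hT, rfl, z, range_fin_three_eq_of_ne T hij hki.symm hkj.symm ▸ hz,
      fun w hw => mem_iUnion₂.2 ⟨q, hq, ?_⟩⟩
    rw [mem_ball] at hw ⊢
    rw [mem_closedBall] at hpq
    linarith [dist_triangle4 w z p q]
  choose! T hT hTA z hz hzQ using hball
  have hdisj : (vertexSetsMeeting 𝒯 x y : Set (Set V)).PairwiseDisjoint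
      fun A => ball (z A) (σ / 8) := by
    intro A hA B hB hAB
    obtain ⟨S, hS, hinter⟩ := hface _ (hT A hA) _ (hT B hB)
    rw [Function.onFun, disjoint_iff_inter_eq_empty, ← subset_empty_iff,
      ← interior_convexHull_inter_convexHull_eq_empty hV hS hinter
        (by rwa [hTA A hA, hTA B hB])]
    exact interior_maximal (inter_subset_inter (hz A hA) (hz B hB))
      (isOpen_ball.inter isOpen_ball)
  have := Module.finite_of_finrank_eq_succ hV
  have := Module.nontrivial_of_finrank_eq_succ hV
  simpa [hV] using
    card_mul_pow_finrank_le_of_pairwiseDisjoint (by positivity) (by norm_num) hdisj hzQ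

end InnerProduct

end FaceCrossing

open FaceCrossing in
/-- Counting of face crossings by a segment (weak form): for any shape-regular
triangulation (pairwise intersections are common faces, edge lengths ≥ 1, angles ≥ θ₀),
the number of triangulation edges crossing the relative interior of a segment of
length `L` in exactly one point is at most `C(L + 1)`, with `C = C(θ₀)`. -/
theorem face_crossing_count (θ₀ : ℝ) (hθ₀ : 0 < θ₀) :
    ∃ C : ℝ, ∀ (𝒯 : Finset (Fin 3 → EuclideanSpace ℝ (Fin 2))),
      -- any two triangles meet in a common face (possibly empty)
      (∀ T₁ ∈ 𝒯, ∀ T₂ ∈ 𝒯, ∃ S : Set (EuclideanSpace ℝ (Fin 2)),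
          S ⊆ Set.range T₁ ∩ Set.range T₂ ∧
          convexHull ℝ (Set.range T₁) ∩ convexHull ℝ (Set.range T₂) = convexHull ℝ S) →
      -- all edge lengths at least 1
      (∀ T ∈ 𝒯, ∀ i j : Fin 3, i ≠ j → 1 ≤ dist (T i) (T j)) →
      -- all angles bounded below by θ₀
      (∀ T ∈ 𝒯, ∀ i j k : Fin 3, i ≠ j → i ≠ k → j ≠ k →
          θ₀ ≤ EuclideanGeometry.angle (T j) (T i) (T k)) →
      ∀ x y : EuclideanSpace ℝ (Fin 2),
        ({e : EuclideanSpace ℝ (Fin 2) × EuclideanSpace ℝ (Fin 2) |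
            ∃ T ∈ 𝒯, ∃ i j : Fin 3, i ≠ j ∧ e = (T i, T j) ∧
              ∃ p, segment ℝ e.1 e.2 ∩ openSegment ℝ x y = {p}}).ncard
          ≤ C * (dist x y + 1) := by
  set θ := min θ₀ 1
  have hθ : 0 < θ := lt_min hθ₀ one_pos
  have hσ : 0 < sin θ :=
    sin_pos_of_pos_of_lt_pi hθ ((min_le_right _ _).trans_lt (by linarith [pi_gt_three]))
  refine ⟨162 / (sin θ / 8) ^ 2, fun 𝒯 hface hedge hangle x y => ?_⟩
  have hsin : ∀ T ∈ 𝒯, ∀ i j k : Fin 3, i ≠ j → i ≠ k → j ≠ k →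
      sin θ ≤ sin (∠ (T j) (T i) (T k)) := fun T hT i j k hij hik hjk =>
    sin_le_sin_angle_of_le_angles (dist_pos.1 (one_pos.trans_le (hedge T hT i j hij))) hθ.le
      ((min_le_left _ _).trans (hangle T hT i j k hij hik hjk))
      ((min_le_left _ _).trans (hangle T hT j i k hij.symm hjk hik))
      ((min_le_left _ _).trans (hangle T hT k i j hik.symm hjk.symm hij))
  obtain ⟨Q, hQcard, hQ⟩ := exists_finset_card_le_segment_subset_iUnion_closedBall x y
  have hedges := (Nat.cast_le (α := ℝ)).2 <| ncard_edges_le_nine_mul_card_vertexSetsMeeting 𝒯 x y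
    (P := fun a b => ∃ p, segment ℝ a b ∩ openSegment ℝ x y = {p}) fun a b ⟨p, hp⟩ =>
      ⟨p, inter_subset_inter_right _ (openSegment_subset_segment ℝ x y) (hp ▸ rfl)⟩
  have hpack := card_vertexSetsMeeting_mul_sq_le finrank_euclideanSpace_fin hface hedge hσ.le
    hsin hQ
  have hρ : 0 < (sin θ / 8) ^ 2 := by positivity
  push_cast at hedges
  rw [div_mul_eq_mul_div, le_div_iff₀ hρ]
  nlinarith [mul_le_mul_of_nonneg_right hedges hρ.le, dist_nonneg (x := x) (y := y)]
end
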